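/- Let Ξ_0 be a finite measure on Δ with Ξ_0({0}) = 0, let E be a compact Polish space, n ∈ ℕ, and let f : E^n → ℝ be bounded and measurable. If μ is a Borel probability measure on E such that G_f(ν) ≤ G_f(μ) for all Borel probability measures ν on E, then L^{Ξ_0}G_f(μ) ≤ 0 (the positive maximum principle). -/

import Mathlib

open MeasureTheory Finset
open scoped Classical

noncomputable section

/-- The infinite simplex `Δ = {ζ : ζ_1 ≥ ζ_2 ≥ ⋯ ≥ 0, Σ ζ_i ≤ 1}` (indexed from 0). -/
def DeltaSet : Set (ℕ → ℝ) :=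
  {ζ | (∀ i, 0 ≤ ζ i) ∧ Antitone ζ ∧ ∀ n, ∑ i ∈ Finset.range n, ζ i ≤ 1}

/-- `|ζ| = Σ_i ζ_i`. -/
def absΔ (ζ : ℕ → ℝ) : ℝ := ∑' i, ζ i

/-- `(ζ,ζ) = Σ_i ζ_i²`. -/
def sqΔ (ζ : ℕ → ℝ) : ℝ := ∑' i, ζ i ^ 2

/-- The sum over pairwise distinct indices `i : ι → ℕ` of `∏_j ζ_{i_j}^{e_j}`. -/
def distinctSum (ζ : ℕ → ℝ) {ι : Type} [Fintype ι] (e : ι → ℕ) : ℝ :=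
  ∑' φ : ι → ℕ, if Function.Injective φ then ∏ i, ζ (φ i) ^ e i else 0

/-- The integrand `Σ_{l=0}^{s} C(s,l) (1-|ζ|)^{s-l} Σ_{distinct} ζ_{i_1}^{k_1} ⋯` appearing
in the coalescence rates, for a family of block sizes `K : ι → ℕ`; here `s` is the number of
indices with `K i = 1`, and the blocks of size `≥ 2` carry the exponents `K i`. -/
def rateIntegrand (ζ : ℕ → ℝ) {ι : Type} [Fintype ι] [DecidableEq ι] (K : ι → ℕ) : ℝ :=
  ∑ l ∈ Finset.range ((Finset.univ.filter fun i => K i = 1).card + 1),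
    ((Finset.univ.filter fun i => K i = 1).card.choose l : ℝ)
      * (1 - absΔ ζ) ^ ((Finset.univ.filter fun i => K i = 1).card - l)
      * distinctSum ζ (Sum.elim (fun i : {i : ι // 2 ≤ K i} => K i.1) (fun _ : Fin l => 1))


variable {E : Type} [MeasurableSpace E]

/-- `G_f(μ) = ∫ f dμ^{⊗n}`. -/
def Gf {n : ℕ} (f : (Fin n → E) → ℝ) (μ : Measure E) : ℝ :=
  ∫ x, f x ∂(Measure.pi fun _ : Fin n => μ)

/-- The resampled measure `(1-|ζ|)μ + Σ_i ζ_i δ_{x_i}`. -/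
def resample (μ : Measure E) (ζ : ℕ → ℝ) (x : ℕ → E) : Measure E :=
  ENNReal.ofReal (1 - absΔ ζ) • μ +
    Measure.sum fun i => ENNReal.ofReal (ζ i) • Measure.dirac (x i)

/-- The generator `L^{Ξ₀}` applied to `G_f` at `μ`, where `μInf` is the infinite product
measure `μ^{⊗ℕ}` on `E^ℕ`. -/
def LXi (Ξ₀ : Measure DeltaSet) (μInf : Measure (ℕ → E)) {n : ℕ}
    (f : (Fin n → E) → ℝ) (μ : Measure E) : ℝ :=
  ∫ ζ : DeltaSet,
    (∫ x, (Gf f (resample μ (ζ : ℕ → ℝ) x) - Gf f μ) ∂μInf) * (sqΔ (ζ : ℕ → ℝ))⁻¹ ∂Ξ₀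

lemma resample_isProbabilityMeasure (μ : Measure E) [IsProbabilityMeasure μ]
    {ζ : ℕ → ℝ} (hζ : ζ ∈ DeltaSet) (x : ℕ → E) :
    IsProbabilityMeasure (resample μ ζ x) := by
  obtain ⟨hnonneg, -, hpartial⟩ := hζ
  have hsummable : Summable ζ := summable_of_sum_range_le hnonneg hpartial
  have habs_le : absΔ ζ ≤ 1 := hsummable.tsum_le_of_sum_range_le hpartial
  have hmass : ENNReal.ofReal (1 - absΔ ζ) + ∑' i, ENNReal.ofReal (ζ i) = 1 := by
    rw [← ENNReal.ofReal_tsum_of_nonneg hnonneg hsummable,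
      ← ENNReal.ofReal_add (sub_nonneg.2 habs_le) (tsum_nonneg hnonneg)]
    simp [absΔ]
  constructor
  simpa [resample, Measure.sum_apply _ MeasurableSet.univ] using hmass

lemma sqΔ_nonneg (ζ : ℕ → ℝ) : 0 ≤ sqΔ ζ :=
  tsum_nonneg fun _ => sq_nonneg _

lemma integral_Gf_resample_sub_nonpos {n : ℕ} {f : (Fin n → E) → ℝ}
    {μ : Measure E} [IsProbabilityMeasure μ]
    (hmax : ∀ ν : Measure E, IsProbabilityMeasure ν → Gf f ν ≤ Gf f μ)
    (μInf : Measure (ℕ → E)) {ζ : ℕ → ℝ} (hζ : ζ ∈ DeltaSet) :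
    ∫ x, (Gf f (resample μ ζ x) - Gf f μ) ∂μInf ≤ 0 :=
  integral_nonpos fun x => sub_nonpos.2 (hmax _ (resample_isProbabilityMeasure μ hζ x))

theorem LXi_nonpos_of_isMaxOn_general
    (Ξ₀ : Measure DeltaSet)
    (E : Type)
    [MeasurableSpace E]
    (n : ℕ) (f : (Fin n → E) → ℝ)
    (μ : Measure E) [IsProbabilityMeasure μ]
    (μInf : Measure (ℕ → E))
    (hmax : ∀ ν : Measure E, IsProbabilityMeasure ν → Gf f ν ≤ Gf f μ) :
    LXi Ξ₀ μInf f μ ≤ 0 :=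
  integral_nonpos fun ζ => mul_nonpos_of_nonpos_of_nonneg
    (integral_Gf_resample_sub_nonpos hmax μInf ζ.2) (inv_nonneg.2 (sqΔ_nonneg _))

/-- the positive maximum principle for `L^{Ξ₀}`: if `G_f` attains its maximum
over probability measures at `μ`, then `L^{Ξ₀}G_f(μ) ≤ 0`. -/
theorem LXi_nonpos_of_isMaxOn
    (Ξ₀ : Measure DeltaSet) [IsFiniteMeasure Ξ₀]
    (hΞ₀ : Ξ₀ {ζ | ∀ i, (ζ : ℕ → ℝ) i = 0} = 0)
    (E : Type) [TopologicalSpace E] [CompactSpace E] [PolishSpace E]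
    [MeasurableSpace E] [BorelSpace E]
    (n : ℕ) (hn : 0 < n) (f : (Fin n → E) → ℝ)
    (hf : Measurable f) (hfbdd : ∃ C, ∀ x, |f x| ≤ C)
    (μ : Measure E) [IsProbabilityMeasure μ]
    (μInf : Measure (ℕ → E))
    (hμInf : ∀ m : ℕ,
      Measure.map (fun (x : ℕ → E) (i : Fin m) => x i) μInf = Measure.pi fun _ : Fin m => μ)
    (hmax : ∀ ν : Measure E, IsProbabilityMeasure ν → Gf f ν ≤ Gf f μ) :
    LXi Ξ₀ μInf f μ ≤ 0 :=
  LXi_nonpos_of_isMaxOn_general Ξ₀ E n f μ μInf hmax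

end
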